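/- Let a QCQP be min xᵀCx s.t. xᵀAᵢx = bᵢ (i=1,...,m) with C, Aᵢ symmetric, and let x_l be a feasible point satisfying the stationarity condition (C - Σᵢ λᵢAᵢ)x_l = 0 for some multipliers λ ∈ ℝ^m. If S := C - Σᵢ λᵢAᵢ is positive semidefinite, then X = x_l x_lᵀ is a global optimum of the SDP relaxation min_{X⪰0} ⟨C,X⟩ s.t. ⟨Aᵢ,X⟩ = bᵢ, and x_l is a global optimum of the QCQP. -/

import Mathlib

open Matrix BigOperators

lemma trace_mul_vecMulVec {n : ℕ} (M : Matrix (Fin n) (Fin n) ℝ) (x : Fin n → ℝ) :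
    (M * vecMulVec x x).trace = x ⬝ᵥ (M *ᵥ x) := by
  simp only [Matrix.trace, Matrix.diag, Matrix.mul_apply, vecMulVec_apply, dotProduct, mulVec]
  exact Finset.sum_congr rfl fun i _ => by
    rw [Finset.mul_sum]; exact Finset.sum_congr rfl fun j _ => by ring

lemma vecMulVec_posSemidef {n : ℕ} (x : Fin n → ℝ) : (vecMulVec x x).PosSemidef := by
  refine posSemidef_iff_dotProduct_mulVec.mpr ⟨?_, ?_⟩
  · ext i j; simp [vecMulVec_apply, mul_comm]
  · intro v
    have h : star v ⬝ᵥ (vecMulVec x x) *ᵥ v = (x ⬝ᵥ v) * (x ⬝ᵥ v) := by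
      simp only [dotProduct, mulVec, vecMulVec_apply, star_trivial, Finset.mul_sum,
        Finset.sum_mul]
      exact Finset.sum_congr rfl fun i _ => Finset.sum_congr rfl fun j _ => by ring
    rw [h]; exact mul_self_nonneg _

open scoped MatrixOrder in
lemma trace_mul_nonneg' {n : ℕ} {S X : Matrix (Fin n) (Fin n) ℝ}
    (hS : S.PosSemidef) (hX : X.PosSemidef) : 0 ≤ (S * X).trace := by
  set B := CFC.sqrt X with hBdef
  have hBt : Bᵀ = B := by
    have h1 : B.IsHermitian := (CFC.sqrt_nonneg X).posSemidef.1
    exact (by simpa using h1 : B.IsSymm)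
  have hBB : X = Bᵀ * B := by
    rw [hBt]
    have := CFC.sq_sqrt X hX.nonneg
    rw [pow_two] at this
    exact this.symm
  rw [hBB, ← Matrix.mul_assoc, Matrix.trace_mul_cycle]
  rw [Matrix.trace]
  apply Finset.sum_nonneg
  intro i _
  have key : (B * S * Bᵀ).diag i = (fun j => B i j) ⬝ᵥ (S *ᵥ fun j => B i j) := by
    simp only [Matrix.diag, Matrix.mul_apply, dotProduct, mulVec, transpose_apply,
      Finset.sum_mul, Finset.mul_sum]
    rw [Finset.sum_comm]
    exact Finset.sum_congr rfl fun j _ => Finset.sum_congr rfl fun k _ => by ring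
  rw [key]
  simpa using hS.dotProduct_mulVec_nonneg (fun j => B i j)

lemma quad_sum {n m : ℕ} (lam : Fin m → ℝ) (A : Fin m → Matrix (Fin n) (Fin n) ℝ)
    (y : Fin n → ℝ) :
    y ⬝ᵥ (∑ i, lam i • A i) *ᵥ y = ∑ i, lam i * (y ⬝ᵥ (A i) *ᵥ y) := by
  rw [show (∑ i, lam i • A i) *ᵥ y = ∑ i, lam i • ((A i) *ᵥ y) by
    simp [← Matrix.smul_mulVec]
    induction (Finset.univ : Finset (Fin m)) using Finset.induction with
    | empty => simp
    | insert _ _ h ih => simp [Finset.sum_insert h, Matrix.add_mulVec, ih]]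
  simp [dotProduct, Finset.mul_sum]
  rw [Finset.sum_comm]
  exact Finset.sum_congr rfl fun i _ => Finset.sum_congr rfl fun j _ => by ring

lemma trace_sum_mul {n m : ℕ} (lam : Fin m → ℝ) (A : Fin m → Matrix (Fin n) (Fin n) ℝ)
    (X : Matrix (Fin n) (Fin n) ℝ) :
    ((∑ i, lam i • A i) * X).trace = ∑ i, lam i * ((A i) * X).trace := by
  rw [Finset.sum_mul]
  rw [Matrix.trace_sum]
  exact Finset.sum_congr rfl fun i _ => by rw [Matrix.smul_mul, Matrix.trace_smul]; rfl

/-- Global optimality certificate: if x_l is feasible for the QCQP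
min xᵀCx s.t. xᵀAᵢx = bᵢ, satisfies stationarity S x_l = 0 for
S = C - Σᵢ λᵢAᵢ, and S ⪰ 0, then X = x_l x_lᵀ is a global optimum of the SDP
relaxation and x_l is a global optimum of the QCQP. -/
theorem certificate_global_optimality
    (n m : ℕ)
    (C : Matrix (Fin n) (Fin n) ℝ) (hC : C.IsSymm)
    (A : Fin m → Matrix (Fin n) (Fin n) ℝ) (hA : ∀ i, (A i).IsSymm)
    (b : Fin m → ℝ)
    (xl : Fin n → ℝ) (hfeas : ∀ i, xl ⬝ᵥ ((A i) *ᵥ xl) = b i)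
    (lam : Fin m → ℝ)
    (hstat : (C - ∑ i, lam i • A i) *ᵥ xl = 0)
    (hpsd : (C - ∑ i, lam i • A i).PosSemidef) :
    -- x_l x_lᵀ is feasible and globally optimal for the SDP relaxation
    ((∀ i, ((A i) * vecMulVec xl xl).trace = b i) ∧ (vecMulVec xl xl).PosSemidef ∧
      ∀ X : Matrix (Fin n) (Fin n) ℝ, X.PosSemidef → (∀ i, ((A i) * X).trace = b i) →
        (C * vecMulVec xl xl).trace ≤ (C * X).trace) ∧
    -- x_l is globally optimal for the QCQP
    (∀ y : Fin n → ℝ, (∀ i, y ⬝ᵥ ((A i) *ᵥ y) = b i) →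
      xl ⬝ᵥ (C *ᵥ xl) ≤ y ⬝ᵥ (C *ᵥ y)) := by
  set S := C - ∑ i, lam i • A i with hSdef
  -- value at xl equals ∑ λᵢ bᵢ
  have hxlS : xl ⬝ᵥ S *ᵥ xl = 0 := by rw [hstat]; simp
  have hquad : ∀ y : Fin n → ℝ,
      y ⬝ᵥ (C *ᵥ y) = y ⬝ᵥ S *ᵥ y + ∑ i, lam i * (y ⬝ᵥ (A i) *ᵥ y) := by
    intro y
    rw [← quad_sum lam A y, hSdef, Matrix.sub_mulVec, dotProduct_sub]
    ring
  have hval : xl ⬝ᵥ (C *ᵥ xl) = ∑ i, lam i * b i := by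
    rw [hquad, hxlS, zero_add]
    exact Finset.sum_congr rfl fun i _ => by rw [hfeas i]
  refine ⟨⟨fun i => by rw [trace_mul_vecMulVec, hfeas i], vecMulVec_posSemidef xl,
    fun X hX hXfeas => ?_⟩, fun y hy => ?_⟩
  · rw [trace_mul_vecMulVec, hval]
    have hdecomp : (C * X).trace = (S * X).trace + ∑ i, lam i * ((A i) * X).trace := by
      rw [hSdef, Matrix.sub_mul, Matrix.trace_sub, trace_sum_mul]
      ring
    rw [hdecomp]
    have h1 : ∑ i, lam i * ((A i) * X).trace = ∑ i, lam i * b i :=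
      Finset.sum_congr rfl fun i _ => by rw [hXfeas i]
    rw [h1]
    have := trace_mul_nonneg' hpsd hX
    linarith
  · rw [hval, hquad y]
    have h1 : ∑ i, lam i * (y ⬝ᵥ (A i) *ᵥ y) = ∑ i, lam i * b i :=
      Finset.sum_congr rfl fun i _ => by rw [hy i]
    rw [h1]
    have := hpsd.dotProduct_mulVec_nonneg y
    simp only [RCLike.star_def, star_trivial] at this
    linarith
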